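/- Let S be an epsilon-finitely G-graded ring (an epsilon-strongly G-graded ring such that the join-closure of {ε_g : g ∈ G} is a finite set). Then for any normal subgroup N of G, the induced G/N-grading is epsilon-strong, and moreover epsilon-finite. -/

import Mathlib

/-- The additive subgroup generated by all products `u * v` with `u ∈ U`, `v ∈ V`. -/
def mulSub {S : Type*} [NonUnitalRing S] (U V : AddSubgroup S) : AddSubgroup S :=
  AddSubgroup.closure (Set.image2 (· * ·) (U : Set S) (V : Set S))

/-- `comp` is a `G`-grading of the ring `S`: the components form an internal direct sum
and `S_g S_h ⊆ S_{gh}`. -/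
def IsGrading {G : Type*} [Group G] [DecidableEq G] {S : Type*} [NonUnitalRing S]
    (comp : G → AddSubgroup S) : Prop :=
  DirectSum.IsInternal comp ∧
    ∀ g h : G, ∀ a ∈ comp g, ∀ b ∈ comp h, a * b ∈ comp (g * h)

/-- The grading `comp` is epsilon-strong: for every `g` there are `ε_g ∈ S_g S_{g⁻¹}` and
`ε'_g ∈ S_{g⁻¹} S_g` with `ε_g s = s = s ε'_g` for all `s ∈ S_g`. -/
def EpsilonStrong {G : Type*} [Group G] {S : Type*} [NonUnitalRing S]
    (comp : G → AddSubgroup S) : Prop :=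
  ∀ g : G, ∃ ε ∈ mulSub (comp g) (comp g⁻¹), ∃ ε' ∈ mulSub (comp g⁻¹) (comp g),
    ∀ s ∈ comp g, ε * s = s ∧ s * ε' = s

/-- The component `S_C = ⊕_{g ∈ C} S_g` of the induced `G/N`-grading. -/
def indComp {G : Type*} [Group G] {S : Type*} [NonUnitalRing S]
    (comp : G → AddSubgroup S) (N : Subgroup G) (C : G ⧸ N) : AddSubgroup S :=
  ⨆ g : {g : G // (g : G ⧸ N) = C}, comp g.1

/-- The closure of a set `A` under the join operation `a ∨ b = a + b - a*b`. -/
inductive JoinClosure {S : Type*} [NonUnitalRing S] (A : Set S) : S → Prop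
  | base {x : S} : x ∈ A → JoinClosure A x
  | join {x y : S} : JoinClosure A x → JoinClosure A y → JoinClosure A (x + y - x * y)

/-- `E` is a set of local units for (the ring with underlying additive group) `T`:
a join-closed set of commuting idempotents contained in `T` such that every element of `T`
has a local unit in `E`. -/
def IsLocalUnitsFor {S : Type*} [NonUnitalRing S] (T : AddSubgroup S) (E : Set S) : Prop :=
  (∀ e ∈ E, e ∈ T) ∧ (∀ e ∈ E, e * e = e) ∧ (∀ e ∈ E, ∀ f ∈ E, e * f = f * e) ∧
  (∀ e ∈ E, ∀ f ∈ E, e + f - e * f ∈ E) ∧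
  (∀ r ∈ T, ∃ f ∈ E, f * r = r ∧ r * f = r)

/-!
The idempotents `ε_g` all lie in `S_e`, and since `ε_g` is a two-sided unit on the ideal
`S_g S_{g⁻¹}` of `S_e`, they commute. For a coset `C`, the set `{ε_g : g ∈ C}` is a finite
set of commuting idempotents, so it has a join `ε_C`, which satisfies `ε_C ε_g = ε_g` for
`g ∈ C`. Hence `ε_C` is a left unit on every `S_g ⊆ S_C`, and by commutativity `ε_{C⁻¹}` is a
right unit there. Being built by joins from elements of `S_g S_{g⁻¹} ⊆ S_C S_{C⁻¹}`, which is
closed under products, `ε_C` lies in `S_C S_{C⁻¹}`. Finally every join of the `ε_C` is a join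
of the `ε_g`, so the join-closure stays finite.
-/

def IsGradedMul {G : Type*} [Group G] {S : Type*} [NonUnitalRing S]
    (comp : G → AddSubgroup S) : Prop :=
  ∀ g h : G, ∀ a ∈ comp g, ∀ b ∈ comp h, a * b ∈ comp (g * h)

def IsEpsilonFamily {G : Type*} [Group G] {S : Type*} [NonUnitalRing S]
    (comp : G → AddSubgroup S) (ε : G → S) : Prop :=
  ∀ g : G, ε g ∈ mulSub (comp g) (comp g⁻¹) ∧ ∀ s ∈ comp g, ε g * s = s ∧ s * ε g⁻¹ = s

section MulSub
variable {S : Type*} [NonUnitalRing S] {U V W : AddSubgroup S} {e x : S}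

lemma mul_mem_mulSub {u v : S} (hu : u ∈ U) (hv : v ∈ V) : u * v ∈ mulSub U V :=
  AddSubgroup.subset_closure (Set.mem_image2_of_mem hu hv)

lemma mulSub_le (h : ∀ u ∈ U, ∀ v ∈ V, u * v ∈ W) : mulSub U V ≤ W :=
  (AddSubgroup.closure_le W).2 <| Set.image2_subset_iff.2 h

lemma mulSub_mono {U' V' : AddSubgroup S} (hU : U ≤ U') (hV : V ≤ V') :
    mulSub U V ≤ mulSub U' V' :=
  mulSub_le fun _ hu _ hv => mul_mem_mulSub (hU hu) (hV hv)

lemma mul_right_mem_mulSub (hV : ∀ v ∈ V, v * e ∈ V) (hx : x ∈ mulSub U V) :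
    x * e ∈ mulSub U V :=
  mulSub_le (W := (mulSub U V).comap (AddMonoidHom.mulRight e))
    (fun u hu v hv => show u * v * e ∈ mulSub U V by
      rw [mul_assoc]; exact mul_mem_mulSub hu (hV v hv)) hx

lemma mul_left_mem_mulSub (hU : ∀ u ∈ U, e * u ∈ U) (hx : x ∈ mulSub U V) :
    e * x ∈ mulSub U V :=
  mulSub_le (W := (mulSub U V).comap (AddMonoidHom.mulLeft e))
    (fun u hu v hv => show e * (u * v) ∈ mulSub U V by
      rw [← mul_assoc]; exact mul_mem_mulSub (hU u hu) hv) hx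

lemma mul_right_eq_self_of_mem_mulSub (hV : ∀ v ∈ V, v * e = v) (hx : x ∈ mulSub U V) :
    x * e = x :=
  mulSub_le (W := (AddMonoidHom.mulRight e).eqLocus (AddMonoidHom.id S))
    (fun u _ v hv => show u * v * e = u * v by rw [mul_assoc, hV v hv]) hx

lemma mul_left_eq_self_of_mem_mulSub (hU : ∀ u ∈ U, e * u = u) (hx : x ∈ mulSub U V) :
    e * x = x :=
  mulSub_le (W := (AddMonoidHom.mulLeft e).eqLocus (AddMonoidHom.id S))
    (fun u hu v _ => show e * (u * v) = u * v by rw [← mul_assoc, hU u hu]) hx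

lemma mul_right_eq_self_of_mem_iSup {ι : Sort*} {F : ι → AddSubgroup S}
    (hF : ∀ i, ∀ s ∈ F i, s * e = s) (hx : x ∈ ⨆ i, F i) : x * e = x :=
  (iSup_le (a := (AddMonoidHom.mulRight e).eqLocus (AddMonoidHom.id S)) hF) hx

lemma mul_left_eq_self_of_mem_iSup {ι : Sort*} {F : ι → AddSubgroup S}
    (hF : ∀ i, ∀ s ∈ F i, e * s = s) (hx : x ∈ ⨆ i, F i) : e * x = x :=
  (iSup_le (a := (AddMonoidHom.mulLeft e).eqLocus (AddMonoidHom.id S)) hF) hx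

end MulSub

namespace JoinClosure
variable {S : Type*} [NonUnitalRing S] {A B : Set S} {x : S}

lemma of_subset_closure (hx : JoinClosure A x) (hAB : A ⊆ {y | JoinClosure B y}) :
    JoinClosure B x := by
  induction hx with
  | base ha => exact hAB ha
  | join _ _ ihx ihy => exact ihx.join ihy

lemma mem_of_mul_mem {I : AddSubgroup S} (hI : ∀ a ∈ I, ∀ b ∈ I, a * b ∈ I)
    (hAI : A ⊆ I) (hx : JoinClosure A x) : x ∈ I := by
  induction hx with
  | base ha => exact hAI ha
  | join _ _ ihx ihy => exact sub_mem (add_mem ihx ihy) (hI _ ihx _ ihy)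

lemma commute_right {a : S} (ha : ∀ e ∈ A, Commute a e) (hx : JoinClosure A x) :
    Commute a x := by
  induction hx with
  | base he => exact ha _ he
  | join _ _ ihx ihy => exact (ihx.add_right ihy).sub_right (ihx.mul_right ihy)

end JoinClosure

lemma exists_joinClosure_mul_eq {S : Type*} [NonUnitalRing S] {A : Set S} (hfin : A.Finite)
    (hne : A.Nonempty) (hidem : ∀ e ∈ A, e * e = e) (hcomm : ∀ e ∈ A, ∀ f ∈ A, Commute e f) :
    ∃ y, JoinClosure A y ∧ ∀ e ∈ A, y * e = e := by
  obtain ⟨a₀, ha₀⟩ := hne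
  refine Set.Finite.induction_on_subset
    (motive := fun B _ => ∃ y, JoinClosure A y ∧ ∀ e ∈ B, y * e = e) A hfin
    ⟨a₀, .base ha₀, by simp⟩ ?_
  rintro a B ha - - ⟨y, hy, hyB⟩
  have hay : a * y = y * a := JoinClosure.commute_right (hcomm a ha) hy
  refine ⟨a + y - a * y, (JoinClosure.base ha).join hy, ?_⟩
  rintro e (rfl | he)
  · rw [sub_mul, add_mul, hidem e ha, hay, mul_assoc, hidem e ha, add_sub_cancel_right]
  · rw [sub_mul, add_mul, mul_assoc, hyB e he, add_sub_cancel_left]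

section Graded
variable {G : Type*} [Group G] {S : Type*} [NonUnitalRing S] {comp : G → AddSubgroup S}

lemma IsGradedMul.mulSub_le (hmul : IsGradedMul comp) (g h : G) :
    mulSub (comp g) (comp h) ≤ comp (g * h) :=
  _root_.mulSub_le (hmul g h)

lemma IsGradedMul.mul_mem_mulSub (hmul : IsGradedMul comp) {g : G} {x y : S}
    (hx : x ∈ mulSub (comp g) (comp g⁻¹)) (hy : y ∈ mulSub (comp g) (comp g⁻¹)) :
    x * y ∈ mulSub (comp g) (comp g⁻¹) := by
  have hy₁ : y ∈ comp (g * g⁻¹) := hmul.mulSub_le g g⁻¹ hy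
  exact mul_right_mem_mulSub (fun v hv => by simpa using hmul _ _ v hv y hy₁) hx

lemma comp_le_indComp (N : Subgroup G) (g : G) : comp g ≤ indComp comp N g :=
  le_iSup (fun g' : {g' : G // (g' : G ⧸ N) = g} => comp g'.1) ⟨g, rfl⟩

lemma IsGradedMul.induced (hmul : IsGradedMul comp) (N : Subgroup G) [N.Normal] :
    IsGradedMul (indComp comp N) := by
  intro C D a ha b hb
  refine AddSubgroup.iSup_induction (C := (· * b ∈ indComp comp N (C * D))) _ ha
    (fun g a ha => ?_) (by rw [zero_mul]; exact zero_mem _)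
    fun x y hx hy => by rw [add_mul]; exact add_mem hx hy
  refine AddSubgroup.iSup_induction (C := (a * · ∈ indComp comp N (C * D))) _ hb
    (fun h b hb => ?_) (by rw [mul_zero]; exact zero_mem _)
    fun x y hx hy => by rw [mul_add]; exact add_mem hx hy
  rw [← g.2, ← h.2]
  exact comp_le_indComp N _ (hmul _ _ a ha b hb)

namespace IsEpsilonFamily
variable {ε : G → S}

lemma mul_epsilon_eq (hε : IsEpsilonFamily comp ε) {g : G} {x : S}
    (hx : x ∈ mulSub (comp g) (comp g⁻¹)) : x * ε g = x :=
  mul_right_eq_self_of_mem_mulSub (fun v hv => by simpa using ((hε g⁻¹).2 v hv).2) hx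

lemma epsilon_mul_eq (hε : IsEpsilonFamily comp ε) {g : G} {x : S}
    (hx : x ∈ mulSub (comp g) (comp g⁻¹)) : ε g * x = x :=
  mul_left_eq_self_of_mem_mulSub (fun u hu => ((hε g).2 u hu).1) hx

lemma epsilon_mul_self (hε : IsEpsilonFamily comp ε) (g : G) : ε g * ε g = ε g :=
  hε.mul_epsilon_eq (hε g).1

lemma epsilon_mem_one (hmul : IsGradedMul comp) (hε : IsEpsilonFamily comp ε) (g : G) :
    ε g ∈ comp 1 := by
  simpa using hmul.mulSub_le g g⁻¹ (hε g).1

lemma commute (hmul : IsGradedMul comp) (hε : IsEpsilonFamily comp ε) (g h : G) :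
    Commute (ε g) (ε h) := by
  have hh := hε.epsilon_mem_one hmul h
  have hgh : ε g * ε h ∈ mulSub (comp g) (comp g⁻¹) :=
    mul_right_mem_mulSub (fun v hv => by simpa using hmul _ _ v hv _ hh) (hε g).1
  have hhg : ε h * ε g ∈ mulSub (comp g) (comp g⁻¹) :=
    mul_left_mem_mulSub (fun u hu => by simpa using hmul _ _ _ hh u hu) (hε g).1
  calc ε g * ε h = ε g * ε h * ε g := (hε.mul_epsilon_eq hgh).symm
    _ = ε h * ε g := by rw [mul_assoc, hε.epsilon_mul_eq hhg]

lemma induced (hmul : IsGradedMul comp) (hε : IsEpsilonFamily comp ε)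
    (N : Subgroup G) [N.Normal] {ε' : G ⧸ N → S}
    (hjoin : ∀ C, JoinClosure (ε '' {g | (g : G ⧸ N) = C}) (ε' C))
    (hunit : ∀ C (g : G), (g : G ⧸ N) = C → ε' C * ε g = ε g) :
    IsEpsilonFamily (indComp comp N) ε' := by
  intro C
  refine ⟨?_, fun s hs => ⟨?_, ?_⟩⟩
  · refine (hjoin C).mem_of_mul_mem (fun a ha b hb => (hmul.induced N).mul_mem_mulSub ha hb) ?_
    rintro _ ⟨g, rfl, rfl⟩
    exact mulSub_mono (comp_le_indComp N g) (comp_le_indComp N g⁻¹) (hε g).1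
  · refine mul_left_eq_self_of_mem_iSup (fun ⟨g, hg⟩ s hs => ?_) hs
    rw [← ((hε g).2 s hs).1, ← mul_assoc, hunit C g hg]
  · refine mul_right_eq_self_of_mem_iSup (fun ⟨g, hg⟩ s hs => ?_) hs
    have hcomm : Commute (ε g⁻¹) (ε' C⁻¹) :=
      (hjoin C⁻¹).commute_right (by rintro _ ⟨h, -, rfl⟩; exact hε.commute hmul g⁻¹ h)
    rw [← ((hε g).2 s hs).2, mul_assoc, hcomm.eq, hunit C⁻¹ g⁻¹ (congrArg Inv.inv hg)]

end IsEpsilonFamily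

end Graded

/-- If `S` is epsilon-finitely `G`-graded (epsilon-strong with finite join-closure of
`{ε_g : g ∈ G}`), then for any normal subgroup `N` the induced `G/N`-grading is
epsilon-strong, and moreover epsilon-finite. -/
theorem stmt16 {G : Type*} [Group G] [DecidableEq G] {S : Type*} [NonUnitalRing S]
    (comp : G → AddSubgroup S) (hgr : IsGrading comp) (ε : G → S)
    (hε : ∀ g : G, ε g ∈ mulSub (comp g) (comp g⁻¹) ∧
      ∀ s ∈ comp g, ε g * s = s ∧ s * ε g⁻¹ = s)
    (hfin : Set.Finite {x | JoinClosure (Set.range ε) x})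
    (N : Subgroup G) [N.Normal] :
    ∃ ε' : G ⧸ N → S,
      (∀ C : G ⧸ N, ε' C ∈ mulSub (indComp comp N C) (indComp comp N C⁻¹) ∧
        ∀ s ∈ indComp comp N C, ε' C * s = s ∧ s * ε' C⁻¹ = s) ∧
      Set.Finite {x | JoinClosure (Set.range ε') x} := by
  have hmul : IsGradedMul comp := hgr.2
  have hε : IsEpsilonFamily comp ε := hε
  have hrange : (Set.range ε).Finite := hfin.subset fun _ => JoinClosure.base
  choose ε' hjoin hunit using fun C : G ⧸ N =>
    exists_joinClosure_mul_eq (hrange.subset (Set.image_subset_range ε _))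
      (Set.Nonempty.image ε (QuotientGroup.mk_surjective C))
      (by rintro _ ⟨g, -, rfl⟩; exact hε.epsilon_mul_self g)
      (by rintro _ ⟨g, -, rfl⟩ _ ⟨h, -, rfl⟩; exact hε.commute hmul g h)
  refine ⟨ε', hε.induced hmul N hjoin fun C g hg => hunit C _ ⟨g, hg, rfl⟩, ?_⟩
  refine hfin.subset fun x hx => hx.of_subset_closure ?_
  rintro _ ⟨C, rfl⟩
  exact (hjoin C).of_subset_closure ((Set.image_subset_range ε _).trans fun _ => .base)
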